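/- For n ∈ ℕ let U_n be uniformly distributed on the set B_n of binary trees with n nodes and let L_n = |{v ∈ V : (0)+v ∈ U_n}| be the size of the left subtree of the root. Then P(L_n = k) = C_k · C_{n-1-k} / C_n for k = 0,...,n−1, where C_m = (1/(m+1))·binom(2m, m) is the m-th Catalan number; moreover for all 0 < a < b < 1 one has lim_{n→∞} P(an < L_n < bn) = 0, and L_n/n converges in distribution to the uniform distribution on the two-point set {0,1}. -/

import Mathlib

open MeasureTheory ProbabilityTheory Filter Topology
open scoped ENNReal NNReal

namespace DMTCS

/-- `V = {0,1}^*`: the set of finite binary words. -/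
abbrev Word : Type := List Bool

/-- `V_∞ = {0,1}^ℕ`: infinite binary sequences, with the product (Borel) σ-field. -/
abbrev BSeq : Type := ℕ → Bool

/-- The prefix of length `k` of an infinite sequence. -/
def prefixSeq (v : BSeq) (k : ℕ) : Word := List.ofFn (fun i : Fin k => v i)

/-- The cylinder set `B_u = {v ∈ V_∞ : u is a prefix of v}`. -/
def cyl (u : Word) : Set BSeq := {v | prefixSeq v u.length = u}

/-- A (finite) binary tree: a prefix-stable finite set of words. -/
def IsBinTree (x : Finset Word) : Prop := ∀ v ∈ x, v ≠ [] → v.dropLast ∈ x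

/-- The number of nodes of the subtree of `x` rooted at `u`, i.e. `|{v : u+v ∈ x}|`. -/
def subCard (x : Finset Word) (u : Word) : ℕ := (x.filter (fun w => u <+: w)).card

/-- The relative subtree size function `t(x,u)`. -/
noncomputable def stf (x : Finset Word) (u : Word) : ℝ := (subCard x u : ℝ) / (x.card : ℝ)

/-- The complete binary tree of height `n`: all words of length at most `n`. -/
def completeTree (n : ℕ) : Finset Word :=
  (Finset.range (n + 1)).biUnion
    (fun k => (Finset.univ : Finset (Fin k → Bool)).image (fun f => List.ofFn f))

instance : MeasurableSpace (Finset Word) := ⊤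

instance (x : Finset Word) : Decidable (IsBinTree x) :=
  inferInstanceAs (Decidable (∀ v ∈ x, v ≠ [] → v.dropLast ∈ x))

/-- The set `𝔹_n` of binary trees with exactly `n` nodes (every such tree consists of
words of length `< n`, hence is contained in the complete tree of height `n`). -/
def binTreesN (n : ℕ) : Finset (Finset Word) :=
  (completeTree n).powerset.filter (fun y => IsBinTree y ∧ y.card = n)

/-- The uniform distribution on a finite set. -/
noncomputable def uniformFinset {α : Type*} [MeasurableSpace α] (s : Finset α) : Measure α :=
  (s.card : ℝ≥0∞)⁻¹ • ∑ a ∈ s, Measure.dirac a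

/- ### Combinatorics -/

noncomputable def desc (b : Bool) (x : Finset Word) : Finset Word :=
  x.preimage (fun v => b :: v) (fun _ _ _ _ h => by simpa using h)

@[simp] lemma mem_desc {b : Bool} {x : Finset Word} {v : Word} :
    v ∈ desc b x ↔ b :: v ∈ x := Finset.mem_preimage

def graft (l r : Finset Word) : Finset Word :=
  insert [] ((l.image (false :: ·)) ∪ (r.image (true :: ·)))

lemma prefix_mem {x : Finset Word} (hx : IsBinTree x) :
    ∀ v ∈ x, ∀ u, u <+: v → u ∈ x := by
  intro v
  induction v using List.reverseRecOn with
  | nil => intro hv u hu; rwa [List.prefix_nil.mp hu]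
  | append_singleton l a ih =>
      intro hv u hu
      rcases List.prefix_concat_iff.mp hu with h | h
      · subst h; exact hv
      · have hl : l ∈ x := by
          have := hx _ hv (by simp)
          simpa using this
        exact ih hl u h

lemma nil_mem {x : Finset Word} (hx : IsBinTree x) (hne : x.Nonempty) : [] ∈ x := by
  obtain ⟨v, hv⟩ := hne
  exact prefix_mem hx v hv ([]) (List.nil_prefix)

lemma length_lt_card {x : Finset Word} (hx : IsBinTree x) {v : Word} (hv : v ∈ x) :
    v.length < x.card := by
  have hsub : (Finset.range (v.length + 1)).image (fun k => v.take k) ⊆ x := by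
    intro u hu
    simp only [Finset.mem_image] at hu
    obtain ⟨k, _, rfl⟩ := hu
    exact prefix_mem hx v hv _ (List.take_prefix k v)
  have hinj : Set.InjOn (fun k => v.take k) (Finset.range (v.length + 1)) := by
    intro i hi j hj hij
    simp only [Finset.coe_range, Set.mem_Iio] at hi hj
    have h2 : min i v.length = min j v.length := by
      simpa [List.length_take] using congrArg List.length hij
    omega
  calc v.length < v.length + 1 := Nat.lt_succ_self _
  _ = ((Finset.range (v.length + 1)).image (fun k => v.take k)).card := by
      rw [Finset.card_image_of_injOn hinj, Finset.card_range]
  _ ≤ x.card := Finset.card_le_card hsub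

lemma mem_completeTree {v : Word} {n : ℕ} : v ∈ completeTree n ↔ v.length ≤ n := by
  simp only [completeTree, Finset.mem_biUnion, Finset.mem_range, Finset.mem_image,
    Finset.mem_univ, true_and]
  constructor
  · rintro ⟨k, hk, f, rfl⟩; simpa [Nat.lt_succ_iff] using hk
  · intro h
    exact ⟨v.length, Nat.lt_succ_of_le h, fun i => v.get i, List.ofFn_get v⟩

lemma mem_binTreesN {x : Finset Word} {n : ℕ} :
    x ∈ binTreesN n ↔ IsBinTree x ∧ x.card = n := by
  simp only [binTreesN, Finset.mem_filter, Finset.mem_powerset, and_iff_right_iff_imp]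
  rintro ⟨hx, hcard⟩
  intro v hv
  exact mem_completeTree.mpr (le_of_lt (hcard ▸ length_lt_card hx hv))

lemma isBinTree_desc {b : Bool} {x : Finset Word} (hx : IsBinTree x) :
    IsBinTree (desc b x) := by
  intro v hv hvne
  rw [mem_desc] at hv ⊢
  have : (b :: v).dropLast ∈ x := hx _ hv (by simp)
  rwa [List.dropLast_cons_of_ne_nil hvne] at this

lemma eq_graft {x : Finset Word} (hx : IsBinTree x) (h0 : [] ∈ x) :
    x = graft (desc false x) (desc true x) := by
  ext w
  simp only [graft, Finset.mem_insert, Finset.mem_union, Finset.mem_image, mem_desc]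
  constructor
  · intro hw
    match w with
    | [] => exact Or.inl rfl
    | false :: t => exact Or.inr (Or.inl ⟨t, hw, rfl⟩)
    | true :: t => exact Or.inr (Or.inr ⟨t, hw, rfl⟩)
  · rintro (rfl | ⟨t, ht, rfl⟩ | ⟨t, ht, rfl⟩) <;> assumption

@[simp] lemma desc_false_graft (l r : Finset Word) : desc false (graft l r) = l := by
  ext v
  simp [graft, mem_desc]

@[simp] lemma desc_true_graft (l r : Finset Word) : desc true (graft l r) = r := by
  ext v
  simp [graft, mem_desc]

lemma isBinTree_graft {l r : Finset Word} (hl : IsBinTree l) (hr : IsBinTree r) :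
    IsBinTree (graft l r) := by
  intro v hv hvne
  simp only [graft, Finset.mem_insert, Finset.mem_union, Finset.mem_image] at hv ⊢
  rcases hv with rfl | ⟨t, ht, rfl⟩ | ⟨t, ht, rfl⟩
  · exact absurd rfl hvne
  · rcases List.eq_nil_or_concat t with rfl | ⟨s, a, rfl⟩
    · simp
    · simp only [List.concat_eq_append] at ht ⊢
      refine Or.inr (Or.inl ⟨(s ++ [a]).dropLast, hl _ ht (by simp), ?_⟩)
      rw [List.dropLast_cons_of_ne_nil (by simp)]
  · rcases List.eq_nil_or_concat t with rfl | ⟨s, a, rfl⟩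
    · simp
    · simp only [List.concat_eq_append] at ht ⊢
      refine Or.inr (Or.inr ⟨(s ++ [a]).dropLast, hr _ ht (by simp), ?_⟩)
      rw [List.dropLast_cons_of_ne_nil (by simp)]

lemma card_graft (l r : Finset Word) : (graft l r).card = 1 + l.card + r.card := by
  rw [graft, Finset.card_insert_of_notMem, Finset.card_union_of_disjoint,
    Finset.card_image_of_injective _ (List.cons_injective),
    Finset.card_image_of_injective _ (List.cons_injective)]
  · ring
  · rw [Finset.disjoint_left]
    rintro w hw hw'
    simp only [Finset.mem_image] at hw hw'
    obtain ⟨t, _, rfl⟩ := hw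
    obtain ⟨s, _, hs⟩ := hw'
    simp at hs
  · simp only [Finset.mem_union, Finset.mem_image]
    rintro (⟨t, _, ht⟩ | ⟨t, _, ht⟩) <;> simp at ht

lemma card_decomp {x : Finset Word} (hx : IsBinTree x) (h0 : [] ∈ x) :
    x.card = 1 + (desc false x).card + (desc true x).card := by
  conv_lhs => rw [eq_graft hx h0]
  exact card_graft _ _

lemma subCard_eq (x : Finset Word) : subCard x ([false]) = (desc false x).card := by
  rw [subCard]
  have : x.filter (fun w => [false] <+: w) = (desc false x).image (false :: ·) := by
    ext w
    simp only [Finset.mem_filter, Finset.mem_image, mem_desc]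
    constructor
    · rintro ⟨hw, hp⟩
      match w, hp with
      | b :: t, hp =>
        have := (List.cons_prefix_cons.mp hp).1
        subst this
        exact ⟨t, hw, rfl⟩
    · rintro ⟨t, ht, rfl⟩
      exact ⟨ht, by simp [List.cons_prefix_cons]⟩
  rw [this, Finset.card_image_of_injective _ (List.cons_injective)]

lemma fiber_card {n k : ℕ} (hk : k < n) :
    ((binTreesN n).filter (fun x => subCard x ([false]) = k)).card
      = (binTreesN k).card * (binTreesN (n - 1 - k)).card := by
  rw [← Finset.card_product]
  apply Finset.card_bij' (fun x _ => (desc false x, desc true x))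
    (fun p _ => graft p.1 p.2)
  · intro x hx
    simp only [Finset.mem_filter, mem_binTreesN] at hx
    obtain ⟨⟨hbt, hcard⟩, hL⟩ := hx
    have h0 : [] ∈ x := nil_mem hbt (Finset.card_pos.mp (hcard ▸ Nat.pos_of_ne_zero (by omega)))
    have hd := card_decomp hbt h0
    rw [subCard_eq] at hL
    simp only [Finset.mem_product, mem_binTreesN]
    exact ⟨⟨isBinTree_desc hbt, by omega⟩, ⟨isBinTree_desc hbt, by omega⟩⟩
  · intro p hp
    simp only [Finset.mem_product, mem_binTreesN] at hp
    obtain ⟨⟨hl, hlc⟩, hr, hrc⟩ := hp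
    simp only [Finset.mem_filter, mem_binTreesN]
    refine ⟨⟨isBinTree_graft hl hr, ?_⟩, ?_⟩
    · rw [card_graft, hlc, hrc]; omega
    · rw [subCard_eq, desc_false_graft, hlc]
  · intro x hx
    simp only [Finset.mem_filter, mem_binTreesN] at hx
    obtain ⟨⟨hbt, hcard⟩, _⟩ := hx
    exact (eq_graft hbt (nil_mem hbt (Finset.card_pos.mp (hcard ▸ Nat.pos_of_ne_zero (by omega))))).symm
  · intro p _
    simp

lemma card_binTreesN (n : ℕ) : (binTreesN n).card = catalan n := by
  induction n using Nat.strong_induction_on with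
  | _ n ih =>
    match n with
    | 0 =>
      rw [catalan_zero]
      have : binTreesN 0 = {∅} := by
        ext x
        rw [mem_binTreesN, Finset.mem_singleton]
        constructor
        · rintro ⟨_, h⟩; exact Finset.card_eq_zero.mp h
        · rintro rfl; exact ⟨fun v hv => absurd hv (by simp), rfl⟩
      rw [this, Finset.card_singleton]
    | n + 1 =>
      rw [Finset.card_eq_sum_card_fiberwise (f := fun x => subCard x ([false]))
        (t := Finset.range (n + 1)) ?_]
      · rw [catalan_succ]
        rw [← Finset.sum_range (fun i => catalan i * catalan (n - i))]
        apply Finset.sum_congr rfl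
        intro k hk
        rw [Finset.mem_range] at hk
        rw [fiber_card (by omega), ih k (by omega), ih (n + 1 - 1 - k) (by omega)]
        congr 1
      · intro x hx
        rw [Finset.mem_coe, mem_binTreesN] at hx
        obtain ⟨hbt, hcard⟩ := hx
        have h0 : [] ∈ x := nil_mem hbt (Finset.card_pos.mp (by omega))
        have := card_decomp hbt h0
        rw [Finset.mem_coe, Finset.mem_range]
        show subCard x ([false]) < n + 1
        rw [subCard_eq]
        omega


/- ### Measure lemmas -/

instance : MeasurableSingletonClass (Finset Word) :=
  ⟨fun _ => MeasurableSpace.measurableSet_top⟩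

lemma measurable_finsetWord {β : Type*} [MeasurableSpace β] (g : Finset Word → β) :
    Measurable g := fun _ _ => MeasurableSpace.measurableSet_top

lemma uniformFinset_apply (s : Finset (Finset Word)) (A : Set (Finset Word))
    [DecidablePred (· ∈ A)] :
    uniformFinset s A = ((s.filter (· ∈ A)).card : ℝ≥0∞) / s.card := by
  rw [uniformFinset, Measure.smul_apply, smul_eq_mul, Measure.finset_sum_apply]
  have h1 : ∀ a ∈ s, Measure.dirac a A = if a ∈ A then (1 : ℝ≥0∞) else 0 := by
    intro a _
    rw [Measure.dirac_apply' _ MeasurableSpace.measurableSet_top]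
    simp [Set.indicator_apply]
  rw [Finset.sum_congr rfl h1, ← Finset.sum_filter, Finset.sum_const, nsmul_eq_mul, mul_one,
    ENNReal.div_eq_inv_mul]

lemma integrable_uniform (g : Finset Word → ℝ) (a : Finset Word) :
    Integrable g (Measure.dirac a) := by
  constructor
  · exact (measurable_finsetWord g).aestronglyMeasurable
  · rw [HasFiniteIntegral, lintegral_dirac]
    exact ENNReal.coe_lt_top

lemma integral_uniformFinset (s : Finset (Finset Word)) (g : Finset Word → ℝ) :
    ∫ y, g y ∂(uniformFinset s) = (s.card : ℝ)⁻¹ * ∑ a ∈ s, g a := by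
  rw [uniformFinset, integral_smul_measure,
    integral_finset_sum_measure (fun a _ => integrable_uniform g a)]
  simp only [integral_dirac, smul_eq_mul]
  congr 1
  simp [ENNReal.toReal_inv]

lemma part1 (n : ℕ) (hn : 1 ≤ n) (k : ℕ) (hk : k ≤ n - 1) :
    uniformFinset (binTreesN n) {y : Finset Word | subCard y ([false]) = k}
      = ((catalan k : ℝ≥0∞) * (catalan (n - 1 - k) : ℝ≥0∞)) / (catalan n : ℝ≥0∞) := by
  classical
  rw [uniformFinset_apply, card_binTreesN]
  have : (binTreesN n).filter (· ∈ {y : Finset Word | subCard y ([false]) = k})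
      = (binTreesN n).filter (fun x => subCard x ([false]) = k) := by
    apply Finset.filter_congr
    intro x _
    simp [Set.mem_setOf_eq]
  rw [this, fiber_card (by omega)]
  rw [card_binTreesN, card_binTreesN]
  push_cast
  ring_nf


/- ### Catalan asymptotics -/

lemma catalan_pos' (n : ℕ) : 0 < catalan n := by
  apply Nat.pos_of_ne_zero
  intro h
  have h2 := succ_mul_catalan_eq_centralBinom n
  rw [h, Nat.mul_zero] at h2
  exact absurd h2.symm (Nat.centralBinom_pos n).ne'

noncomputable def cR (n : ℕ) : ℝ := catalan n
noncomputable def cbR (n : ℕ) : ℝ := Nat.centralBinom n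
noncomputable def pp (n k : ℕ) : ℝ := cR k * cR (n - 1 - k) / cR n
noncomputable def aB (m : ℕ) : ℝ := cbR m / 4 ^ m
noncomputable def qq (k : ℕ) : ℝ := cR k / 4 ^ (k + 1)

lemma cR_pos (n : ℕ) : 0 < cR n := by
  have := catalan_pos' n
  rw [cR]; exact_mod_cast this

lemma cbR_pos (n : ℕ) : 0 < cbR n := by
  have := Nat.centralBinom_pos n
  rw [cbR]; exact_mod_cast this

lemma pp_nonneg (n k : ℕ) : 0 ≤ pp n k :=
  le_of_lt (div_pos (mul_pos (cR_pos _) (cR_pos _)) (cR_pos _))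

lemma cR_eq (k : ℕ) : cR k = cbR k / (k + 1) := by
  have := succ_mul_catalan_eq_centralBinom k
  have h : ((k : ℝ) + 1) * cR k = cbR k := by
    rw [cR, cbR]; exact_mod_cast this
  field_simp [← h]
  linear_combination h

lemma cbR_succ (k : ℕ) : cbR (k + 1) = 2 * (2 * k + 1) * cbR k / (k + 1) := by
  have := Nat.succ_mul_centralBinom_succ k
  have h : ((k : ℝ) + 1) * cbR (k + 1) = 2 * (2 * k + 1) * cbR k := by
    rw [cbR, cbR]; exact_mod_cast this
  field_simp [← h]
  linear_combination h

lemma cR_succ (k : ℕ) : ((k : ℝ) + 2) * cR (k + 1) = 2 * (2 * k + 1) * cR k := by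
  rw [cR_eq, cR_eq, cbR_succ]
  push_cast
  field_simp
  ring

lemma sum_pp {n : ℕ} (hn : 1 ≤ n) : ∑ k ∈ Finset.range n, pp n k = 1 := by
  obtain ⟨m, rfl⟩ := Nat.exists_eq_add_of_le hn
  have hc : ∑ k ∈ Finset.range (1 + m), (catalan k * catalan (1 + m - 1 - k) : ℝ)
      = catalan (1 + m) := by
    rw [add_comm 1 m, catalan_succ, ← Finset.sum_range (fun i => catalan i * catalan (m - i))]
    push_cast
    apply Finset.sum_congr rfl
    intro k _
    congr 2
  simp only [pp, cR]
  rw [← Finset.sum_div, hc, div_self (by exact_mod_cast (catalan_pos' (1 + m)).ne' : ((catalan (1 + m) : ℝ)) ≠ 0)]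

lemma qq_eq (k : ℕ) : qq k = (aB k - aB (k + 1)) / 2 := by
  rw [qq, aB, aB, cR_eq, cbR_succ]
  have h4 : (4 : ℝ) ^ (k + 1) = 4 * 4 ^ k := by ring
  have hk1 : ((k : ℝ) + 1) ≠ 0 := by positivity
  field_simp
  ring

lemma aB_zero : aB 0 = 1 := by simp [aB, cbR, Nat.centralBinom_zero]

lemma sum_qq (M : ℕ) : ∑ k ∈ Finset.range M, qq k = (1 - aB M) / 2 := by
  have : ∀ k, qq k = (aB k - aB (k + 1)) / 2 := qq_eq
  simp only [this]
  rw [← Finset.sum_div, Finset.sum_range_sub' aB, aB_zero]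

lemma aB_pos (m : ℕ) : 0 < aB m := div_pos (cbR_pos m) (by positivity)

lemma aB_succ (k : ℕ) : aB (k + 1) = aB k * (2 * k + 1) / (2 * k + 2) := by
  rw [aB, aB, cbR_succ]
  have hk1 : ((k : ℝ) + 1) ≠ 0 := by positivity
  have h4 : (4 : ℝ) ^ (k + 1) = 4 * 4 ^ k := by ring
  field_simp
  ring

lemma aB_sq_le (M : ℕ) : aB M ^ 2 * (2 * M + 1) ≤ 1 := by
  induction M with
  | zero => simp [aB_zero]
  | succ k ih =>
      rw [aB_succ]
      have h1 : (0:ℝ) < 2 * k + 2 := by positivity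
      have key : (aB k * (2 * k + 1) / (2 * k + 2)) ^ 2 * (2 * (k+1) + 1)
          ≤ aB k ^ 2 * (2 * k + 1) := by
        rw [div_pow, div_mul_eq_mul_div, div_le_iff₀ (by positivity)]
        have h2 : ((2:ℝ) * k + 1) * (2 * (k+1) + 1) ≤ (2 * k + 2) ^ 2 := by nlinarith
        have h3 : (0:ℝ) ≤ aB k ^ 2 * (2 * k + 1) := by positivity
        push_cast
        nlinarith [sq_nonneg (aB k), aB_pos k]
      push_cast at key ⊢
      linarith
lemma aB_tendsto : Tendsto aB atTop (𝓝 0) := by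
  have h1 : Tendsto (fun M : ℕ => ((2 * M + 1 : ℝ))⁻¹) atTop (𝓝 0) := by
    apply Tendsto.inv_tendsto_atTop
    apply tendsto_atTop_add_const_right
    exact (tendsto_natCast_atTop_atTop (R := ℝ)).const_mul_atTop two_pos
  have h2 : Tendsto (fun M : ℕ => Real.sqrt ((2 * M + 1 : ℝ))⁻¹) atTop (𝓝 0) := by
    have h3 := (Real.continuous_sqrt.tendsto 0).comp h1
    simpa [Function.comp_def] using h3
  apply squeeze_zero (fun M => (aB_pos M).le) _ h2
  intro M
  have hpos : (0:ℝ) < 2 * M + 1 := by positivity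
  have hM : aB M ^ 2 ≤ ((2 * M + 1 : ℝ))⁻¹ := by
    rw [inv_eq_one_div, le_div_iff₀ hpos]
    exact aB_sq_le M
  calc aB M = Real.sqrt (aB M ^ 2) := by rw [Real.sqrt_sq (aB_pos M).le]
  _ ≤ Real.sqrt ((2 * M + 1 : ℝ))⁻¹ := Real.sqrt_le_sqrt hM


/- ### Limits -/

lemma ratio_tendsto : Tendsto (fun n => cR n / cR (n + 1)) atTop (𝓝 (1 / 4)) := by
  have key : ∀ n : ℕ, 1 ≤ n → cR n / cR (n + 1) = (1 + 2 / n) / (4 + 2 / n) := by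
    intro n hn
    have h := cR_succ n
    have hn0 : (n : ℝ) ≠ 0 := by positivity
    have hA : cR n / cR (n + 1) = ((n:ℝ) + 2) / (4 * n + 2) := by
      rw [div_eq_div_iff (cR_pos _).ne' (by positivity : (0:ℝ) < 4 * n + 2).ne']
      nlinarith [h]
    rw [hA, div_eq_div_iff (by positivity : (0:ℝ) < 4 * n + 2).ne'
      (by positivity : (0:ℝ) < 4 + 2 / n).ne']
    field_simp

  have lim : Tendsto (fun n : ℕ => (1 + 2 / (n:ℝ)) / (4 + 2 / n)) atTop (𝓝 (1 / 4)) := by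
    have hz := tendsto_const_div_atTop_nhds_zero_nat (2 : ℝ)
    have h1 : Tendsto (fun n : ℕ => 1 + 2 / (n:ℝ)) atTop (𝓝 1) := by
      simpa using tendsto_const_nhds.add hz
    have h4 : Tendsto (fun n : ℕ => 4 + 2 / (n:ℝ)) atTop (𝓝 4) := by
      simpa using tendsto_const_nhds.add hz
    exact h1.div h4 (by norm_num)
  apply lim.congr'
  filter_upwards [eventually_ge_atTop 1] with n hn
  exact (key n hn).symm

lemma ratio_tendsto_k (k : ℕ) :
    Tendsto (fun n => cR n / cR (n + k + 1)) atTop (𝓝 ((1 / 4) ^ (k + 1))) := by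
  induction k with
  | zero => simpa using ratio_tendsto
  | succ k ih =>
      have hshift : Tendsto (fun n => cR (n + (k + 1)) / cR (n + (k + 1) + 1)) atTop (𝓝 (1/4)) :=
        ratio_tendsto.comp (tendsto_add_atTop_nat (k + 1))
      have prod := ih.mul hshift
      have heq : ∀ n : ℕ, (cR n / cR (n + k + 1)) * (cR (n + (k + 1)) / cR (n + (k + 1) + 1))
          = cR n / cR (n + (k + 1) + 1) := by
        intro n
        have hne : cR (n + k + 1) ≠ 0 := (cR_pos _).ne'
        have : n + (k + 1) = n + k + 1 := by omega
        rw [this]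
        field_simp
      have : Tendsto (fun n => cR n / cR (n + (k + 1) + 1)) atTop
          (𝓝 ((1/4) ^ (k + 1) * (1/4))) := by
        apply prod.congr
        intro n
        exact heq n
      simpa [pow_succ] using this

lemma pp_tendsto (k : ℕ) : Tendsto (fun n => pp n k) atTop (𝓝 (qq k)) := by
  have comp : Tendsto (fun n : ℕ => cR (n - (k + 1)) / cR (n - (k + 1) + k + 1)) atTop
      (𝓝 ((1/4) ^ (k + 1))) := (ratio_tendsto_k k).comp (tendsto_sub_atTop_nat (k + 1))
  have h2 : Tendsto (fun n : ℕ => cR (n - 1 - k) / cR n) atTop (𝓝 ((1/4) ^ (k + 1))) := by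
    apply comp.congr'
    filter_upwards [eventually_ge_atTop (k + 1)] with n hn
    have e1 : n - (k + 1) = n - 1 - k := by omega
    rw [e1]
    rw [(by omega : n - 1 - k + k + 1 = n)]
  have h3 := h2.const_mul (cR k)
  have : qq k = cR k * (1/4) ^ (k + 1) := by
    rw [qq, div_pow, one_pow, div_eq_mul_inv, mul_comm (cR k), mul_comm (cR k), inv_eq_one_div]
  rw [this]
  apply h3.congr
  intro n
  rw [pp, mul_div_assoc]

lemma pp_tendsto_tail (k : ℕ) : Tendsto (fun n => pp n (n - 1 - k)) atTop (𝓝 (qq k)) := by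
  apply (pp_tendsto k).congr'
  filter_upwards [eventually_ge_atTop (k + 1)] with n hn
  have e : n - 1 - (n - 1 - k) = k := by omega
  rw [pp, pp, e, mul_comm]

noncomputable def Hs (M n : ℕ) : ℝ := ∑ k ∈ Finset.range M, pp n k
noncomputable def Ts (M n : ℕ) : ℝ := ∑ j ∈ Finset.range M, pp n (n - 1 - j)
noncomputable def Ms (M n : ℕ) : ℝ := ∑ k ∈ Finset.Ico M (n - M), pp n k

lemma Hs_tendsto (M : ℕ) : Tendsto (Hs M) atTop (𝓝 ((1 - aB M) / 2)) := by
  rw [← sum_qq M]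
  exact tendsto_finset_sum _ (fun k _ => pp_tendsto k)

lemma Ts_tendsto (M : ℕ) : Tendsto (Ts M) atTop (𝓝 ((1 - aB M) / 2)) := by
  rw [← sum_qq M]
  exact tendsto_finset_sum _ (fun k _ => pp_tendsto_tail k)

lemma tail_reflect (M n : ℕ) (hn : 2 * M + 1 ≤ n) (g : ℕ → ℝ) :
    ∑ k ∈ Finset.Ico (n - M) n, g k = ∑ j ∈ Finset.range M, g (n - 1 - j) := by
  apply Finset.sum_nbij' (fun k => n - 1 - k) (fun j => n - 1 - j)
  · intro k hk
    simp only [Finset.mem_Ico] at hk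
    simp only [Finset.mem_range]
    omega
  · intro j hj
    simp only [Finset.mem_range] at hj
    simp only [Finset.mem_Ico]
    omega
  · intro k hk
    simp only [Finset.mem_Ico] at hk
    omega
  · intro j hj
    simp only [Finset.mem_range] at hj
    omega
  · intro k hk
    simp only [Finset.mem_Ico] at hk
    congr 1
    omega

lemma sum_split (M n : ℕ) (hn : 2 * M + 1 ≤ n) (g : ℕ → ℝ) :
    ∑ k ∈ Finset.range n, g k
      = (∑ k ∈ Finset.range M, g k) + (∑ k ∈ Finset.Ico M (n - M), g k)
        + (∑ j ∈ Finset.range M, g (n - 1 - j)) := by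
  rw [Finset.range_eq_Ico,
    ← Finset.sum_Ico_consecutive g (by omega : 0 ≤ n - M) (by omega : n - M ≤ n),
    ← Finset.sum_Ico_consecutive g (by omega : (0:ℕ) ≤ M) (by omega : M ≤ n - M),
    tail_reflect M n hn g, ← Finset.range_eq_Ico]

lemma HMT_sum (M n : ℕ) (hn : 2 * M + 1 ≤ n) : Hs M n + Ms M n + Ts M n = 1 := by
  rw [Hs, Ms, Ts, ← sum_split M n hn (pp n), sum_pp (by omega)]

lemma Ms_tendsto (M : ℕ) : Tendsto (Ms M) atTop (𝓝 (aB M)) := by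
  have h : Tendsto (fun n => 1 - Hs M n - Ts M n) atTop
      (𝓝 (1 - (1 - aB M) / 2 - (1 - aB M) / 2)) :=
    (tendsto_const_nhds.sub (Hs_tendsto M)).sub (Ts_tendsto M)
  have : (1 : ℝ) - (1 - aB M) / 2 - (1 - aB M) / 2 = aB M := by ring
  rw [this] at h
  apply h.congr'
  filter_upwards [eventually_ge_atTop (2 * M + 1)] with n hn
  have := HMT_sum M n hn
  linarith


/- ### Bridges -/

lemma subCard_lt {y : Finset Word} {n : ℕ} (hn : 1 ≤ n) (hy : y ∈ binTreesN n) :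
    subCard y ([false]) < n := by
  rw [mem_binTreesN] at hy
  obtain ⟨hbt, hcard⟩ := hy
  have h0 : [] ∈ y := nil_mem hbt (Finset.card_pos.mp (by omega))
  have := card_decomp hbt h0
  rw [subCard_eq]
  omega

lemma count_eq {n : ℕ} (hn : 1 ≤ n) (P : ℕ → Prop) [DecidablePred P] :
    ((binTreesN n).filter (fun y => P (subCard y ([false])))).card
      = ∑ k ∈ (Finset.range n).filter P, catalan k * catalan (n - 1 - k) := by
  rw [Finset.card_eq_sum_card_fiberwise (f := fun y => subCard y ([false]))
    (t := (Finset.range n).filter P)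
    (fun y hy => by
      have hy' := Finset.mem_filter.mp (Finset.mem_coe.mp hy)
      exact Finset.mem_coe.mpr (Finset.mem_filter.mpr ⟨Finset.mem_range.mpr (subCard_lt hn hy'.1), hy'.2⟩))]
  apply Finset.sum_congr rfl
  intro k hk
  simp only [Finset.mem_filter, Finset.mem_range] at hk
  rw [Finset.filter_filter]
  have he : ((binTreesN n).filter (fun y => P (subCard y ([false])) ∧ subCard y ([false]) = k))
      = (binTreesN n).filter (fun y => subCard y ([false]) = k) := by
    apply Finset.filter_congr
    intro y _
    constructor
    · rintro ⟨_, h⟩; exact h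
    · intro h; exact ⟨h ▸ hk.2, h⟩
  rw [he, fiber_card hk.1, card_binTreesN, card_binTreesN]

lemma measure_P {n : ℕ} (hn : 1 ≤ n) (P : ℕ → Prop) [DecidablePred P] :
    uniformFinset (binTreesN n) {y : Finset Word | P (subCard y ([false]))}
      = ENNReal.ofReal (∑ k ∈ (Finset.range n).filter P, pp n k) := by
  classical
  rw [uniformFinset_apply, card_binTreesN]
  have h1 : (binTreesN n).filter (· ∈ {y : Finset Word | P (subCard y ([false]))})
      = (binTreesN n).filter (fun y => P (subCard y ([false]))) :=
    Finset.filter_congr (by simp)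
  rw [h1, count_eq hn P]
  have h2 : (∑ k ∈ (Finset.range n).filter P, pp n k)
      = ((∑ k ∈ (Finset.range n).filter P, (catalan k * catalan (n - 1 - k)) : ℕ) : ℝ) / cR n := by
    push_cast
    rw [Finset.sum_div]
    apply Finset.sum_congr rfl
    intro k _
    rw [pp, cR, cR, cR]
  rw [h2, ENNReal.ofReal_div_of_pos (cR_pos n), ENNReal.ofReal_natCast, cR,
    ENNReal.ofReal_natCast]

lemma integral_P {n : ℕ} (hn : 1 ≤ n) (g : ℕ → ℝ) :
    ∫ y, g (subCard y ([false])) ∂(uniformFinset (binTreesN n))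
      = ∑ k ∈ Finset.range n, pp n k * g k := by
  classical
  rw [integral_uniformFinset,
    ← Finset.sum_fiberwise_of_maps_to
      (g := fun y => subCard y ([false]))
      (fun y hy => Finset.mem_range.mpr (subCard_lt hn hy))
      (fun y => g (subCard y ([false]))), card_binTreesN, Finset.mul_sum]
  apply Finset.sum_congr rfl
  intro k hk
  have hin : ∑ y ∈ (binTreesN n).filter (fun y => subCard y ([false]) = k),
      g (subCard y ([false]))
      = (((binTreesN n).filter (fun y => subCard y ([false]) = k)).card : ℝ) * g k := by
    rw [Finset.sum_congr rfl (fun y hy => by rw [(Finset.mem_filter.mp hy).2]),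
      Finset.sum_const, nsmul_eq_mul]
  rw [hin, fiber_card (Finset.mem_range.mp hk), card_binTreesN, card_binTreesN, pp]
  simp only [cR]
  push_cast
  ring

/- ### Part 2 -/

lemma Ms_nonneg (M n : ℕ) : 0 ≤ Ms M n := Finset.sum_nonneg (fun k _ => pp_nonneg n k)
lemma Ts_nonneg (M n : ℕ) : 0 ≤ Ts M n := Finset.sum_nonneg (fun k _ => pp_nonneg n _)
lemma Hs_nonneg (M n : ℕ) : 0 ≤ Hs M n := Finset.sum_nonneg (fun k _ => pp_nonneg n _)

set_option maxHeartbeats 1000000 in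
lemma part2 (a b : ℝ) (ha : 0 < a) (hab : a < b) (hb : b < 1) :
    Tendsto (fun n =>
        uniformFinset (binTreesN n)
          {y : Finset Word | a * n < (subCard y ([false]) : ℝ)
            ∧ (subCard y ([false]) : ℝ) < b * n})
      atTop (𝓝 0) := by
  classical
  set S : ℕ → ℝ := fun n =>
    ∑ k ∈ (Finset.range n).filter (fun k : ℕ => a * n < (k : ℝ) ∧ (k : ℝ) < b * n), pp n k with hS
  have hS0 : Tendsto S atTop (𝓝 0) := by
    rw [Metric.tendsto_nhds]
    intro ε hε
    obtain ⟨M, hM⟩ := (aB_tendsto.eventually_lt_const hε).exists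
    have hE2 : ∀ᶠ n : ℕ in atTop, (M : ℝ) ≤ a * n :=
      (tendsto_natCast_atTop_atTop.const_mul_atTop ha).eventually_ge_atTop (M : ℝ)
    have hE3 : ∀ᶠ n : ℕ in atTop, (M : ℝ) ≤ (1 - b) * n :=
      (tendsto_natCast_atTop_atTop.const_mul_atTop (by linarith)).eventually_ge_atTop (M : ℝ)
    have hMs : ∀ᶠ n in atTop, Ms M n < ε := (Ms_tendsto M).eventually_lt_const hM
    filter_upwards [hMs, eventually_ge_atTop (2 * M + 1), hE2, hE3] with n h1 h2 h3 h4
    have hsub : (Finset.range n).filter (fun k : ℕ => a * n < (k : ℝ) ∧ (k : ℝ) < b * n)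
        ⊆ Finset.Ico M (n - M) := by
      intro k hk
      simp only [Finset.mem_filter, Finset.mem_range] at hk
      obtain ⟨hkn, hk1, hk2⟩ := hk
      have hMk : (M : ℝ) < (k : ℝ) := lt_of_le_of_lt h3 hk1
      have hMk' : M < k := by exact_mod_cast hMk
      have hkM : (k : ℝ) + (M : ℝ) < (n : ℝ) := by nlinarith
      have hkM' : k + M < n := by exact_mod_cast hkM
      simp only [Finset.mem_Ico]
      omega
    have hle : S n ≤ Ms M n :=
      Finset.sum_le_sum_of_subset_of_nonneg hsub (fun k _ _ => pp_nonneg n k)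
    have hnn : 0 ≤ S n := Finset.sum_nonneg (fun k _ => pp_nonneg n k)
    rw [Real.dist_eq, sub_zero, abs_of_nonneg hnn]
    linarith
  have heq : ∀ᶠ n : ℕ in atTop,
      uniformFinset (binTreesN n)
        {y : Finset Word | a * n < (subCard y ([false]) : ℝ)
          ∧ (subCard y ([false]) : ℝ) < b * n} = ENNReal.ofReal (S n) := by
    filter_upwards [eventually_ge_atTop 1] with n hn
    exact measure_P hn (fun k : ℕ => a * n < (k : ℝ) ∧ (k : ℝ) < b * n)
  have h2 : Tendsto (fun n => ENNReal.ofReal (S n)) atTop (𝓝 0) := by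
    rw [← ENNReal.ofReal_zero]
    exact ENNReal.tendsto_ofReal hS0
  exact h2.congr' (heq.mono fun n h => h.symm)

/- ### Part 3 -/

lemma Hs_le_one {M n : ℕ} (hn : 2 * M + 1 ≤ n) : Hs M n ≤ 1 := by
  have := HMT_sum M n hn
  have := Ms_nonneg M n
  have := Ts_nonneg M n
  linarith

lemma part3 (f : BoundedContinuousFunction ℝ ℝ) :
    Tendsto (fun n => ∫ y, f ((subCard y ([false]) : ℝ) / n) ∂(uniformFinset (binTreesN n)))
      atTop (𝓝 ((f 0 + f 1) / 2)) := by
  classical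
  set B := ‖f‖ with hBdef
  have hB : ∀ x : ℝ, |f x| ≤ B := fun x => by
    have := f.norm_coe_le_norm x
    rwa [Real.norm_eq_abs] at this
  have hBnn : 0 ≤ B := norm_nonneg f
  set T : ℕ → ℝ := fun n => ∑ k ∈ Finset.range n, pp n k * f ((k : ℝ) / n) with hT
  have hTlim : Tendsto T atTop (𝓝 ((f 0 + f 1) / 2)) := by
    rw [Metric.tendsto_nhds]
    intro ε hε
    set ε' := ε / (3 + 4 * B) with hε'def
    have hε' : 0 < ε' := by positivity
    obtain ⟨M, hM⟩ := (aB_tendsto.eventually_lt_const hε').exists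
    obtain ⟨δ₀, hδ₀, hf0⟩ := Metric.continuous_iff.mp f.continuous 0 ε' hε'
    obtain ⟨δ₁, hδ₁, hf1⟩ := Metric.continuous_iff.mp f.continuous 1 ε' hε'
    set δ := min δ₀ δ₁ with hδdef
    have hδ : 0 < δ := lt_min hδ₀ hδ₁
    have hF2 : ∀ᶠ n : ℕ in atTop, (M : ℝ) / n < δ :=
      (tendsto_const_div_atTop_nhds_zero_nat (M : ℝ)).eventually_lt_const hδ
    have hF3 : ∀ᶠ n in atTop, dist (Hs M n) ((1 - aB M) / 2) < ε' / 2 :=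
      Metric.tendsto_nhds.mp (Hs_tendsto M) (ε' / 2) (by positivity)
    have hF4 : ∀ᶠ n in atTop, dist (Ts M n) ((1 - aB M) / 2) < ε' / 2 :=
      Metric.tendsto_nhds.mp (Ts_tendsto M) (ε' / 2) (by positivity)
    have hF5 : ∀ᶠ n in atTop, Ms M n < 2 * ε' :=
      (Ms_tendsto M).eventually_lt_const (by linarith)
    filter_upwards [hF2, hF3, hF4, hF5, eventually_ge_atTop (2 * M + 1)]
      with n h2 h3 h4 h5 h6
    have hn1 : (1 : ℕ) ≤ n := by omega
    have hnR : (0 : ℝ) < n := by exact_mod_cast (by omega : 0 < n)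
    -- the five pieces
    set A1 := ∑ k ∈ Finset.range M, pp n k * (f ((k : ℝ) / n) - f 0) with hA1
    set A2 := f 0 * (Hs M n - 1 / 2) with hA2
    set A3 := ∑ k ∈ Finset.Ico M (n - M), pp n k * f ((k : ℝ) / n) with hA3
    set A4 := ∑ j ∈ Finset.range M, pp n (n - 1 - j) * (f (((n - 1 - j : ℕ) : ℝ) / n) - f 1)
      with hA4
    set A5 := f 1 * (Ts M n - 1 / 2) with hA5
    have e1 : ∑ k ∈ Finset.range M, pp n k * f ((k : ℝ) / n) = A1 + f 0 * Hs M n := by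
      rw [hA1, Hs, Finset.mul_sum, ← Finset.sum_add_distrib]
      apply Finset.sum_congr rfl
      intro k _
      ring
    have e2 : ∑ j ∈ Finset.range M, pp n (n - 1 - j) * f (((n - 1 - j : ℕ) : ℝ) / n)
        = A4 + f 1 * Ts M n := by
      rw [hA4, Ts, Finset.mul_sum, ← Finset.sum_add_distrib]
      apply Finset.sum_congr rfl
      intro j _
      ring
    have key : T n - (f 0 + f 1) / 2 = A1 + A2 + A3 + A4 + A5 := by
      rw [hT]
      simp only
      rw [sum_split M n h6 (fun k => pp n k * f ((k : ℝ) / n)), e1, e2, hA2, hA3, hA5]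
      ring
    have hHs1 : Hs M n ≤ 1 := Hs_le_one h6
    have hb1 : |A1| ≤ ε' := by
      rw [hA1]
      refine (Finset.abs_sum_le_sum_abs _ _).trans ?_
      have hterm : ∀ k ∈ Finset.range M, |pp n k * (f ((k : ℝ) / n) - f 0)| ≤ pp n k * ε' := by
        intro k hk
        rw [abs_mul, abs_of_nonneg (pp_nonneg n k)]
        apply mul_le_mul_of_nonneg_left _ (pp_nonneg n k)
        have hkM : (k : ℝ) < M := by exact_mod_cast Finset.mem_range.mp hk
        have hdist : dist ((k : ℝ) / n) 0 < δ₀ := by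
          rw [Real.dist_eq, sub_zero, abs_of_nonneg (by positivity)]
          have hlt : (k : ℝ) / n < (M : ℝ) / n := by gcongr
          exact lt_of_lt_of_le (lt_trans hlt h2) (min_le_left _ _)
        have hd := hf0 _ hdist
        rw [Real.dist_eq] at hd
        exact hd.le
      refine (Finset.sum_le_sum hterm).trans ?_
      rw [← Finset.sum_mul]
      have hHs : (∑ k ∈ Finset.range M, pp n k) = Hs M n := rfl
      rw [hHs]
      calc Hs M n * ε' ≤ 1 * ε' := mul_le_mul_of_nonneg_right hHs1 hε'.le
        _ = ε' := one_mul ε'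
    have hb4 : |A4| ≤ ε' := by
      rw [hA4]
      refine (Finset.abs_sum_le_sum_abs _ _).trans ?_
      have hterm : ∀ j ∈ Finset.range M,
          |pp n (n - 1 - j) * (f (((n - 1 - j : ℕ) : ℝ) / n) - f 1)| ≤ pp n (n - 1 - j) * ε' := by
        intro j hj
        rw [abs_mul, abs_of_nonneg (pp_nonneg n _)]
        apply mul_le_mul_of_nonneg_left _ (pp_nonneg n _)
        have hjM : j < M := Finset.mem_range.mp hj
        have hcast : ((n - 1 - j : ℕ) : ℝ) = (n : ℝ) - (1 + j) := by
          rw [(by omega : n - 1 - j = n - (1 + j)), Nat.cast_sub (by omega)]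
          push_cast
          ring
        have hdist : dist (((n - 1 - j : ℕ) : ℝ) / n) 1 < δ₁ := by
          rw [Real.dist_eq, hcast]
          have hrw : ((n : ℝ) - (1 + j)) / n - 1 = -((1 + j) / n) := by field_simp; ring
          rw [hrw, abs_neg, abs_of_nonneg (by positivity)]
          have hjM' : (1 + (j : ℝ)) ≤ M := by exact_mod_cast (by omega : 1 + j ≤ M)
          have hle : (1 + (j : ℝ)) / n ≤ (M : ℝ) / n := by gcongr
          exact lt_of_le_of_lt hle (lt_of_lt_of_le h2 (min_le_right _ _))
        have hd := hf1 _ hdist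
        rw [Real.dist_eq] at hd
        exact hd.le
      refine (Finset.sum_le_sum hterm).trans ?_
      rw [← Finset.sum_mul]
      have hTs : (∑ j ∈ Finset.range M, pp n (n - 1 - j)) = Ts M n := rfl
      rw [hTs]
      have hTs1 : Ts M n ≤ 1 := by
        have := HMT_sum M n h6
        have := Ms_nonneg M n
        have := Hs_nonneg M n
        linarith
      calc Ts M n * ε' ≤ 1 * ε' := mul_le_mul_of_nonneg_right hTs1 hε'.le
        _ = ε' := one_mul ε'
    have hHshalf : |Hs M n - 1 / 2| < ε' := by
      rw [Real.dist_eq] at h3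
      have h3' := abs_lt.mp h3
      have := aB_pos M
      rw [abs_lt]
      constructor <;> [linarith [h3'.1]; linarith [h3'.2]]
    have hTshalf : |Ts M n - 1 / 2| < ε' := by
      rw [Real.dist_eq] at h4
      have h4' := abs_lt.mp h4
      have := aB_pos M
      rw [abs_lt]
      constructor <;> [linarith [h4'.1]; linarith [h4'.2]]
    have hb2 : |A2| ≤ B * ε' := by
      rw [hA2, abs_mul]
      exact mul_le_mul (hB 0) hHshalf.le (abs_nonneg _) hBnn
    have hb5 : |A5| ≤ B * ε' := by
      rw [hA5, abs_mul]
      exact mul_le_mul (hB 1) hTshalf.le (abs_nonneg _) hBnn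
    have hb3 : |A3| ≤ B * (2 * ε') := by
      rw [hA3]
      refine (Finset.abs_sum_le_sum_abs _ _).trans ?_
      have hterm : ∀ k ∈ Finset.Ico M (n - M),
          |pp n k * f ((k : ℝ) / n)| ≤ pp n k * B := by
        intro k _
        rw [abs_mul, abs_of_nonneg (pp_nonneg n k)]
        exact mul_le_mul_of_nonneg_left (hB _) (pp_nonneg n k)
      refine (Finset.sum_le_sum hterm).trans ?_
      rw [← Finset.sum_mul]
      have hMsr : (∑ k ∈ Finset.Ico M (n - M), pp n k) = Ms M n := rfl
      rw [hMsr]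
      calc Ms M n * B ≤ (2 * ε') * B :=
            mul_le_mul_of_nonneg_right h5.le hBnn
        _ = B * (2 * ε') := mul_comm _ _
    have habs : |A1 + A2 + A3 + A4 + A5| ≤ |A1| + |A2| + |A3| + |A4| + |A5| := by
      have t1 := abs_add_le (A1 + A2 + A3 + A4) A5
      have t2 := abs_add_le (A1 + A2 + A3) A4
      have t3 := abs_add_le (A1 + A2) A3
      have t4 := abs_add_le A1 A2
      linarith
    have hd : (0 : ℝ) < 3 + 4 * B := by positivity
    have hfin : (2 + 4 * B) * ε' < ε := by
      rw [hε'def, ← mul_div_assoc, div_lt_iff₀ hd]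
      nlinarith
    rw [Real.dist_eq, key]
    calc |A1 + A2 + A3 + A4 + A5| ≤ |A1| + |A2| + |A3| + |A4| + |A5| := habs
      _ ≤ ε' + B * ε' + B * (2 * ε') + ε' + B * ε' := by linarith
      _ = (2 + 4 * B) * ε' := by ring
      _ < ε := hfin
  have heq : ∀ᶠ n : ℕ in atTop,
      (∫ y, f ((subCard y ([false]) : ℝ) / n) ∂(uniformFinset (binTreesN n))) = T n := by
    filter_upwards [eventually_ge_atTop 1] with n hn
    exact integral_P hn (fun k => f ((k : ℝ) / n))
  exact hTlim.congr' (heq.mono fun n h => h.symm)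


/-- For `U_n` uniform on `𝔹_n` and `L_n` the size of the left subtree of the root:
`P(L_n = k) = C_k C_{n-1-k} / C_n` for `k = 0,...,n-1`; for all `0 < a < b < 1`,
`P(an < L_n < bn) → 0`; and `L_n/n` converges in distribution to the uniform
distribution on `{0,1}`. -/
theorem stmt10 :
    (∀ n : ℕ, 1 ≤ n → ∀ k : ℕ, k ≤ n - 1 →
      uniformFinset (binTreesN n) {y : Finset Word | subCard y ([false]) = k}
        = ((catalan k : ℝ≥0∞) * (catalan (n - 1 - k) : ℝ≥0∞)) / (catalan n : ℝ≥0∞)) ∧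
    (∀ a b : ℝ, 0 < a → a < b → b < 1 →
      Tendsto (fun n =>
          uniformFinset (binTreesN n)
            {y : Finset Word | a * n < (subCard y ([false]) : ℝ) ∧ (subCard y ([false]) : ℝ) < b * n})
        atTop (𝓝 0)) ∧
    (∀ f : BoundedContinuousFunction ℝ ℝ,
      Tendsto (fun n =>
          ∫ y, f ((subCard y ([false]) : ℝ) / n) ∂(uniformFinset (binTreesN n)))
        atTop (𝓝 ((f 0 + f 1) / 2))) :=
  ⟨fun n hn k hk => part1 n hn k hk, fun a b ha hab hb => part2 a b ha hab hb,
    fun f => part3 f⟩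

end DMTCS
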